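/- A priori bound on the solution of a rough differential equation (estimates (2.9) and (2.10)): Let 1/3 < κ < γ ≤ 1, T > 0, let (x, X²) be a γ-rough path over [0,T] with values in ℝ^m, let σ ∈ C³(ℝ^d; ℝ^{d×m}) be bounded with bounded derivatives up to order three, a ∈ ℝ^d, and let y be the unique solution with exponent 3κ of dy = σ(y)dx, y_0 = a. Then there exists a polynomial P : ℝ² → [0,∞) with nonnegative coefficients, depending only on T, σ, γ, κ, d, m, such that for all 0 ≤ s ≤ t ≤ T: |y_t − y_s| ≤ (t−s)^κ P(‖x‖_{γ,∞,T}, ‖X²‖_{2γ}) and |y_t − y_s − σ(y_s)(x_t − x_s)| ≤ (t−s)^{2κ} P(‖x‖_{γ,∞,T}, ‖X²‖_{2γ}), where ‖x‖_{γ,∞,T} = sup_{t∈[0,T]} |x_t| + sup_{s≠t} |x_t − x_s|/|t−s|^γ. -/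

import Mathlib

open Set
open scoped ENNReal

noncomputable section

/-- `ℝ^m` with the Euclidean norm. -/
abbrev Vec (m : ℕ) := EuclideanSpace ℝ (Fin m)

/-- `ℝ^{m×m}` with the Euclidean norm. -/
abbrev Mat (m : ℕ) := EuclideanSpace ℝ (Fin m × Fin m)

/-- Sup "norm" `sup_{t ∈ [a,b]} ‖f t‖` as an extended nonnegative real. -/
noncomputable def supENorm {E : Type*} [NormedAddCommGroup E] (a b : ℝ) (f : ℝ → E) : ℝ≥0∞ :=
  ⨆ t : Icc a b, ENNReal.ofReal ‖f t‖

/-- γ-Hölder seminorm `sup_{a ≤ s < t ≤ b} ‖f t - f s‖/(t-s)^γ` as an extended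
nonnegative real. -/
noncomputable def holderENorm {E : Type*} [NormedAddCommGroup E] (γ a b : ℝ) (f : ℝ → E) :
    ℝ≥0∞ :=
  ⨆ p : {p : ℝ × ℝ // a ≤ p.1 ∧ p.1 < p.2 ∧ p.2 ≤ b},
    ENNReal.ofReal (‖f p.1.2 - f p.1.1‖ / (p.1.2 - p.1.1) ^ γ)

/-- Hölder seminorm `sup_{a ≤ s < t ≤ b} ‖X_{st}‖/(t-s)^β` of a two-parameter function,
as an extended nonnegative real. -/
noncomputable def holder2ENorm {E : Type*} [NormedAddCommGroup E] (β a b : ℝ)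
    (X : ℝ → ℝ → E) : ℝ≥0∞ :=
  ⨆ p : {p : ℝ × ℝ // a ≤ p.1 ∧ p.1 < p.2 ∧ p.2 ≤ b},
    ENNReal.ofReal (‖X p.1.1 p.1.2‖ / (p.1.2 - p.1.1) ^ β)

/-- The real-valued γ-Hölder norm `‖f‖_{γ,∞} = sup ‖f‖ + Hölder seminorm` on `[a,b]`. -/
noncomputable def holderInftyNorm {E : Type*} [NormedAddCommGroup E] (γ a b : ℝ)
    (f : ℝ → E) : ℝ :=
  (supENorm a b f + holderENorm γ a b f).toReal

/-- A γ-rough path `(x, X²)` over `[a,b]` with values in `ℝ^m`: `x` has finite γ-Hölder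
seminorm, `X²` is continuous on the simplex with finite 2γ-Hölder seminorm and Chen's
relation holds. -/
def IsRoughPath (m : ℕ) (γ a b : ℝ) (x : ℝ → Vec m) (X2 : ℝ → ℝ → Mat m) : Prop :=
  holderENorm γ a b x < ⊤ ∧
  ContinuousOn (fun p : ℝ × ℝ => X2 p.1 p.2)
    {p : ℝ × ℝ | a ≤ p.1 ∧ p.1 ≤ p.2 ∧ p.2 ≤ b} ∧
  holder2ENorm (2 * γ) a b X2 < ⊤ ∧
  ∀ s u t : ℝ, a ≤ s → s ≤ u → u ≤ t → t ≤ b → ∀ i j : Fin m,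
    X2 s t (i, j) - X2 s u (i, j) - X2 u t (i, j) = (x u i - x s i) * (x t j - x u j)

/-- `σ` is `C³`, bounded with bounded derivatives up to order three. -/
def IsC3Bounded {E F : Type*} [NormedAddCommGroup E] [NormedSpace ℝ E]
    [NormedAddCommGroup F] [NormedSpace ℝ F] (σ : E → F) : Prop :=
  ContDiff ℝ 3 σ ∧ ∀ n : ℕ, n ≤ 3 → ∃ B : ℝ, ∀ z : E, ‖iteratedFDeriv ℝ n σ z‖ ≤ B

/-- The vector field `D^{(i)}σ^{(j)} = ∑_l σ^{(i)}_l ∂_l σ^{(j)}`, i.e. the derivative of the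
`j`-th column of `σ` in the direction of the `i`-th column. -/
noncomputable def Dvf (d m : ℕ) (σ : Vec d → Vec m →L[ℝ] Vec d) (i j : Fin m)
    (z : Vec d) : Vec d :=
  fderiv ℝ (fun w => σ w (EuclideanSpace.single j (1 : ℝ))) z
    (σ z (EuclideanSpace.single i (1 : ℝ)))

/-- `y` is a solution, with exponent `θ`, of the rough differential equation `dy = σ(y)dx`,
`y_0 = a`, on `[0,T]` (Davie's formulation). -/
def IsRDESolution (d m : ℕ) (θ T : ℝ) (σ : Vec d → Vec m →L[ℝ] Vec d) (x : ℝ → Vec m)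
    (X2 : ℝ → ℝ → Mat m) (a : Vec d) (y : ℝ → Vec d) : Prop :=
  ContinuousOn y (Icc 0 T) ∧ y 0 = a ∧
  ∃ C : ℝ, ∀ s t : ℝ, 0 ≤ s → s ≤ t → t ≤ T →
    ‖y t - y s - σ (y s) (x t - x s) -
        ∑ i : Fin m, ∑ j : Fin m, X2 s t (i, j) • Dvf d m σ i j (y s)‖
      ≤ C * (t - s) ^ θ

/-!
Write `R_{st}` for the remainder of Davie's expansion of `y` and
`G = 1 + ‖x‖_{γ,∞} + ‖X²‖_{2γ}`. If `‖R‖ ≤ G |t-s|^θ` holds on the two halves of `[s,t]`,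
with `θ = (1 + 3κ)/2 ∈ (1, 3κ)`, then the increments of `y` on `[s,u]` are of order
`G |u-s|^κ`, and Chen's relation writes `R_{st} - R_{su} - R_{ut}` as a sum of terms of size
`O(G³ |t-s|^{2κ+γ})`. Since `θ > 1` and `2κ + γ > θ`, the bound on `R` therefore survives
doubling the interval as long as `|t-s|` stays below a scale `H` whose inverse is polynomial
in `G`; it holds at tiny scales by the qualitative bound `C |t-s|^{3κ}`, hence up to `H`.
Below `H` the increments of `y` are controlled by `G |t-s|^κ` and `G |t-s|^{2κ}`; chaining
over `⌈T/H⌉` subintervals gives the bounds on `[0,T]`, with constants polynomial in `G`.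
-/

open Finset

section Holder

variable {E : Type*} [NormedAddCommGroup E]

theorem norm_le_holder2ENorm_toReal_mul {β a b s t : ℝ} {X : ℝ → ℝ → E}
    (hX : holder2ENorm β a b X ≠ ⊤) (hs : a ≤ s) (hst : s < t) (ht : t ≤ b) :
    ‖X s t‖ ≤ (holder2ENorm β a b X).toReal * (t - s) ^ β := by
  have hle : ENNReal.ofReal (‖X s t‖ / (t - s) ^ β) ≤ holder2ENorm β a b X :=
    le_iSup (fun p : {p : ℝ × ℝ // a ≤ p.1 ∧ p.1 < p.2 ∧ p.2 ≤ b} =>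
      ENNReal.ofReal (‖X p.1.1 p.1.2‖ / (p.1.2 - p.1.1) ^ β)) ⟨(s, t), hs, hst, ht⟩
  rwa [ENNReal.ofReal_le_iff_le_toReal hX, div_le_iff₀ (by have := sub_pos.2 hst; positivity)]
    at hle

theorem norm_sub_le_holderENorm_toReal_mul {γ a b s t : ℝ} {f : ℝ → E}
    (hf : holderENorm γ a b f ≠ ⊤) (hs : a ≤ s) (hst : s ≤ t) (ht : t ≤ b) :
    ‖f t - f s‖ ≤ (holderENorm γ a b f).toReal * (t - s) ^ γ := by
  rcases hst.eq_or_lt with rfl | hlt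
  · rw [sub_self, norm_zero, sub_self]
    positivity
  · exact norm_le_holder2ENorm_toReal_mul (X := fun s t => f t - f s) hf hs hlt ht

theorem supENorm_ne_top_of_holderENorm_ne_top {γ a b : ℝ} {f : ℝ → E} (hγ : 0 ≤ γ)
    (hf : holderENorm γ a b f ≠ ⊤) : supENorm a b f ≠ ⊤ := by
  refine ne_top_of_le_ne_top
    (ENNReal.ofReal_ne_top (r := ‖f a‖ + (holderENorm γ a b f).toReal * (b - a) ^ γ))
    (iSup_le fun ⟨t, hat, htb⟩ => ENNReal.ofReal_le_ofReal ?_)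
  calc ‖f t‖ ≤ ‖f a‖ + ‖f t - f a‖ := norm_le_norm_add_norm_sub' _ _
    _ ≤ ‖f a‖ + (holderENorm γ a b f).toReal * (t - a) ^ γ := by
        gcongr; exact norm_sub_le_holderENorm_toReal_mul hf le_rfl hat htb
    _ ≤ ‖f a‖ + (holderENorm γ a b f).toReal * (b - a) ^ γ := by
        gcongr

theorem holderENorm_toReal_le_holderInftyNorm {γ a b : ℝ} {f : ℝ → E} (hγ : 0 ≤ γ)
    (hf : holderENorm γ a b f ≠ ⊤) : (holderENorm γ a b f).toReal ≤ holderInftyNorm γ a b f :=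
  ENNReal.toReal_mono (ENNReal.add_ne_top.2 ⟨supENorm_ne_top_of_holderENorm_ne_top hγ hf, hf⟩)
    le_add_self

end Holder

theorem halving_induction {Q : ℝ → Prop} {H h₀ : ℝ} (hH : 0 < H) (hh₀ : 0 < h₀)
    (hanti : ∀ a b, a ≤ b → Q b → Q a) (hQ : Q h₀)
    (hstep : ∀ h, 0 < h → h ≤ H → Q (h / 2) → Q h) : Q H := by
  have hdyadic : ∀ j : ℕ, Q (H / 2 ^ j) → Q H := by
    intro j
    induction j with
    | zero => simp
    | succ j ih =>
      intro hj
      refine ih (hstep _ (by positivity) (div_le_self hH.le (one_le_pow₀ one_le_two)) ?_)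
      rwa [div_div, ← pow_succ]
  obtain ⟨k, hk⟩ := pow_unbounded_of_one_lt (H / h₀) one_lt_two
  refine hdyadic k (hanti _ _ ?_ hQ)
  rw [div_lt_iff₀ hh₀] at hk
  rw [div_le_iff₀ (by positivity)]
  linarith

theorem exists_pos_forall_mul_rpow_le (C : ℝ) {G ρ : ℝ} (hG : 0 < G) (hρ : 0 < ρ) :
    ∃ h₀ > 0, ∀ ℓ, 0 ≤ ℓ → ℓ ≤ h₀ → C * ℓ ^ ρ ≤ G := by
  refine ⟨(G / (|C| + 1)) ^ ρ⁻¹, by positivity, fun ℓ hℓ hℓh => ?_⟩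
  calc C * ℓ ^ ρ ≤ |C| * ((G / (|C| + 1)) ^ ρ⁻¹) ^ ρ := by
        gcongr
        exact le_abs_self C
    _ = |C| / (|C| + 1) * G := by
        rw [Real.rpow_inv_rpow (by positivity) hρ.ne']
        ring
    _ ≤ 1 * G := by
        gcongr
        rw [div_le_one (by positivity)]
        linarith
    _ = G := one_mul G

theorem norm_sub_le_of_forall_norm_sub_le_rpow {E : Type*} [SeminormedAddCommGroup E]
    {f : ℝ → E} {s t H A κ : ℝ} (hst : s ≤ t) (hH : 0 < H) (hA : 0 ≤ A) (hκ : 0 ≤ κ)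
    (hloc : ∀ u v, s ≤ u → u < v → v ≤ t → v - u ≤ H → ‖f v - f u‖ ≤ A * (v - u) ^ κ) :
    ‖f t - f s‖ ≤ ((t - s) / H + 1) * A * (t - s) ^ κ := by
  rcases hst.eq_or_lt with rfl | hst
  · simp only [sub_self, norm_zero, zero_div, zero_add, one_mul]
    positivity
  set N := ⌈(t - s) / H⌉₊
  have hN : 0 < (N : ℝ) := Nat.cast_pos.2 (Nat.ceil_pos.2 (div_pos (sub_pos.2 hst) hH))
  set gap := (t - s) / N
  have hgap : 0 < gap := div_pos (sub_pos.2 hst) hN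
  have hgapH : gap ≤ H := by
    rw [div_le_iff₀ hN, ← div_le_iff₀' hH]
    exact Nat.le_ceil _
  have hgapt : gap ≤ t - s := div_le_self (sub_pos.2 hst).le (by exact_mod_cast hN)
  have hpt : ∀ k : ℕ, k ≤ N → s + k * gap ≤ t := fun k hk => by
    have : (k : ℝ) * gap ≤ N * gap := by gcongr
    rw [mul_div_cancel₀ _ hN.ne'] at this
    linarith
  have htel : f t - f s = ∑ k ∈ range N, (f (s + (k + 1 : ℕ) * gap) - f (s + k * gap)) := by
    rw [sum_range_sub (fun k : ℕ => f (s + k * gap)), mul_div_cancel₀ _ hN.ne']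
    simp
  have hterm : ∀ k ∈ range N, ‖f (s + (k + 1 : ℕ) * gap) - f (s + k * gap)‖ ≤ A * (t - s) ^ κ := by
    intro k hk
    have hk : k + 1 ≤ N := mem_range.1 hk
    have hlen : s + (k + 1 : ℕ) * gap - (s + k * gap) = gap := by push_cast; ring
    refine (hloc _ _ (le_add_of_nonneg_right (by positivity)) (by linarith)
      (hpt _ hk) (by rw [hlen]; exact hgapH)).trans ?_
    rw [hlen]
    gcongr
  calc ‖f t - f s‖ ≤ ∑ _k ∈ range N, A * (t - s) ^ κ := htel ▸ norm_sum_le_of_le _ hterm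
    _ = N * (A * (t - s) ^ κ) := by rw [sum_const, card_range, nsmul_eq_mul]
    _ ≤ ((t - s) / H + 1) * (A * (t - s) ^ κ) := by
        gcongr
        exact (Nat.ceil_lt_add_one (div_pos (sub_pos.2 hst) hH).le).le
    _ = ((t - s) / H + 1) * A * (t - s) ^ κ := by ring

theorem rpow_le_inv_mul_rpow_two_mul {H ℓ κ : ℝ} (hH : 0 < H) (hH1 : H ≤ 1) (hHℓ : H ≤ ℓ)
    (hκ : 0 ≤ κ) (hκ1 : κ ≤ 1) : ℓ ^ κ ≤ H⁻¹ * ℓ ^ (2 * κ) := by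
  have hℓ : 0 < ℓ := hH.trans_le hHℓ
  rw [le_inv_mul_iff₀ hH, two_mul, Real.rpow_add hℓ]
  calc H * ℓ ^ κ ≤ H ^ κ * ℓ ^ κ := by
        gcongr
        simpa using Real.rpow_le_rpow_of_exponent_ge hH hH1 hκ1
    _ ≤ ℓ ^ κ * ℓ ^ κ := by gcongr

theorem exists_small_scale (c : ℝ) {ε η : ℝ} (hε : 0 < ε) (hη : 0 < η) :
    ∃ (b : ℝ) (r : ℕ), 1 ≤ b ∧ ∀ A : ℝ, 1 ≤ A →
      ∃ H : ℝ, 0 < H ∧ H ≤ 1 ∧ c * A * H ^ ε ≤ η ∧ H⁻¹ ≤ b * A ^ r := by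
  set c' := max c 1
  have hc' : 0 < c' := lt_max_of_lt_right one_pos
  set δ := min 1 (η / c')
  have hδ : 0 < δ := lt_min one_pos (div_pos hη hc')
  have hδ1 : δ ≤ 1 := min_le_left _ _
  set r := ⌈ε⁻¹⌉₊
  have hr : 1 ≤ (r : ℝ) * ε :=
    calc 1 = ε⁻¹ * ε := (inv_mul_cancel₀ hε.ne').symm
      _ ≤ r * ε := by gcongr; exact Nat.le_ceil _
  refine ⟨δ⁻¹ ^ r, r, one_le_pow₀ (one_le_inv_iff₀.2 ⟨hδ, hδ1⟩), fun A hA => ?_⟩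
  have hA0 : 0 < A := one_pos.trans_le hA
  have hδA : δ / A ≤ 1 := div_le_one_of_le₀ (hδ1.trans hA) hA0.le
  refine ⟨(δ / A) ^ r, by positivity, pow_le_one₀ (by positivity) hδA, ?_, ?_⟩
  · calc c * A * ((δ / A) ^ r) ^ ε ≤ c' * A * (δ / A) ^ (1 : ℝ) := by
          rw [← Real.rpow_natCast, ← Real.rpow_mul (by positivity)]
          exact mul_le_mul (mul_le_mul_of_nonneg_right (le_max_left c 1) hA0.le)
            (Real.rpow_le_rpow_of_exponent_ge (by positivity) hδA hr) (by positivity)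
            (by positivity)
      _ = c' * δ := by rw [Real.rpow_one]; field_simp
      _ ≤ c' * (η / c') := by gcongr; exact min_le_right _ _
      _ = η := by field_simp
  · rw [← inv_pow, inv_div, div_eq_mul_inv, mul_pow, mul_comm]

theorem mul_one_add_add_pow_le_sum_choose {c K X : ℝ} (n : ℕ) (hc : 0 ≤ c) (hK : 0 ≤ K)
    (hX : 0 ≤ X) :
    c * (1 + K + X) ^ n ≤ ∑ i ∈ range (n + 1), ∑ j ∈ range (n + 1),
      c * (n.choose i : ℝ) * (n.choose j : ℝ) * K ^ i * X ^ j := by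
  have hbinom : ∀ Y : ℝ, (1 + Y) ^ n = ∑ i ∈ range (n + 1), (n.choose i : ℝ) * Y ^ i := by
    intro Y
    rw [add_comm, add_pow]
    exact sum_congr rfl fun i _ => by ring
  calc c * (1 + K + X) ^ n ≤ c * ((1 + K) * (1 + X)) ^ n := by
        gcongr
        nlinarith [mul_nonneg hK hX]
    _ = _ := by
        rw [mul_pow, hbinom, hbinom, sum_mul_sum, mul_sum]
        exact sum_congr rfl fun i _ => by rw [mul_sum]; exact sum_congr rfl fun j _ => by ring

structure IsRoughPathBoundedBy {m : ℕ} (γ T G : ℝ) (x : ℝ → Vec m) (X2 : ℝ → ℝ → Mat m) :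
    Prop where
  norm_sub_le : ∀ u v, 0 ≤ u → u < v → v ≤ T → ‖x v - x u‖ ≤ G * (v - u) ^ γ
  norm_le : ∀ u v, 0 ≤ u → u < v → v ≤ T → ‖X2 u v‖ ≤ G * (v - u) ^ (2 * γ)
  chen : ∀ s u t : ℝ, 0 ≤ s → s ≤ u → u ≤ t → t ≤ T → ∀ i j : Fin m,
    X2 s t (i, j) - X2 s u (i, j) - X2 u t (i, j) = (x u i - x s i) * (x t j - x u j)

theorem IsRoughPath.isRoughPathBoundedBy {m : ℕ} {γ T : ℝ} {x : ℝ → Vec m}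
    {X2 : ℝ → ℝ → Mat m} (h : IsRoughPath m γ 0 T x X2) (hγ : 0 ≤ γ) :
    IsRoughPathBoundedBy γ T
      (1 + holderInftyNorm γ 0 T x + (holder2ENorm (2 * γ) 0 T X2).toReal) x X2 := by
  obtain ⟨hx, -, hX, hchen⟩ := h
  have hK := holderENorm_toReal_le_holderInftyNorm hγ hx.ne
  have hK0 : 0 ≤ holderInftyNorm γ 0 T x := ENNReal.toReal_nonneg
  have hX0 : 0 ≤ (holder2ENorm (2 * γ) 0 T X2).toReal := ENNReal.toReal_nonneg
  refine ⟨fun u v hu huv hv => ?_, fun u v hu huv hv => ?_, hchen⟩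
  · refine (norm_sub_le_holderENorm_toReal_mul hx.ne hu huv.le hv).trans ?_
    have := sub_pos.2 huv
    gcongr
    linarith
  · refine (norm_le_holder2ENorm_toReal_mul hX.ne hu huv hv).trans ?_
    have := sub_pos.2 huv
    gcongr
    linarith

structure IsC2BoundedBy {E F : Type*} [NormedAddCommGroup E] [NormedSpace ℝ E]
    [NormedAddCommGroup F] [NormedSpace ℝ F] (σ : E → F) (M : ℝ) : Prop where
  differentiable : Differentiable ℝ σ
  norm_le : ∀ z, ‖σ z‖ ≤ M
  norm_fderiv_le : ∀ z, ‖fderiv ℝ σ z‖ ≤ M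
  norm_fderiv_sub_le : ∀ z w, ‖fderiv ℝ σ z - fderiv ℝ σ w‖ ≤ M * ‖z - w‖

namespace IsC2BoundedBy

variable {E F : Type*} [NormedAddCommGroup E] [NormedSpace ℝ E] [NormedAddCommGroup F]
  [NormedSpace ℝ F] {σ : E → F} {M : ℝ}

theorem nonneg (h : IsC2BoundedBy σ M) : 0 ≤ M := (norm_nonneg _).trans (h.norm_le 0)

theorem norm_sub_le (h : IsC2BoundedBy σ M) (z w : E) : ‖σ z - σ w‖ ≤ M * ‖z - w‖ :=
  convex_univ.norm_image_sub_le_of_norm_fderiv_le (fun u _ => h.differentiable u)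
    (fun u _ => h.norm_fderiv_le u) (mem_univ w) (mem_univ z)

theorem norm_sub_sub_fderiv_le (h : IsC2BoundedBy σ M) (z w : E) :
    ‖σ w - σ z - fderiv ℝ σ z (w - z)‖ ≤ M * ‖w - z‖ ^ 2 := by
  have hseg : ∀ u ∈ segment ℝ z w, ‖fderiv ℝ σ u - fderiv ℝ σ z‖ ≤ M * ‖w - z‖ := by
    intro u hu
    exact (h.norm_fderiv_sub_le u z).trans
      (mul_le_mul_of_nonneg_left (norm_sub_le_of_mem_segment hu) h.nonneg)
  simpa [sq, mul_assoc] using (convex_segment z w).norm_image_sub_le_of_norm_fderiv_le'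
    (fun u _ => h.differentiable u) hseg (left_mem_segment ℝ z w) (right_mem_segment ℝ z w)

end IsC2BoundedBy

theorem IsC3Bounded.exists_isC2BoundedBy {E F : Type*} [NormedAddCommGroup E]
    [NormedSpace ℝ E] [NormedAddCommGroup F] [NormedSpace ℝ F] {σ : E → F}
    (h : IsC3Bounded σ) : ∃ M, IsC2BoundedBy σ M := by
  obtain ⟨hC, hB⟩ := h
  obtain ⟨B₀, hB₀⟩ := hB 0 (by norm_num)
  obtain ⟨B₁, hB₁⟩ := hB 1 (by norm_num)
  obtain ⟨B₂, hB₂⟩ := hB 2 (by norm_num)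
  have hd2 : Differentiable ℝ (fderiv ℝ σ) :=
    (hC.fderiv_right (m := 2) (by norm_num)).differentiable (by norm_num)
  refine ⟨max B₀ (max B₁ B₂), hC.differentiable (by norm_num), fun z => ?_, fun z => ?_,
    fun z w => ?_⟩
  · rw [← norm_iteratedFDeriv_zero (𝕜 := ℝ)]
    exact (hB₀ z).trans (le_max_left _ _)
  · rw [← norm_iteratedFDeriv_one]
    exact (hB₁ z).trans (by simp)
  · refine convex_univ.norm_image_sub_le_of_norm_fderiv_le (fun u _ => hd2 u)
      (fun u _ => ?_) (mem_univ w) (mem_univ z)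
    rw [← norm_iteratedFDeriv_one, norm_iteratedFDeriv_fderiv]
    exact (hB₂ u).trans (by simp)

section VectorFields

variable {d m : ℕ} {σ : Vec d → Vec m →L[ℝ] Vec d} {M : ℝ}

theorem Dvf_eq_fderiv_apply {z : Vec d} (hσ : DifferentiableAt ℝ σ z) (i j : Fin m) :
    Dvf d m σ i j z =
      fderiv ℝ σ z (σ z (EuclideanSpace.single i 1)) (EuclideanSpace.single j 1) := by
  rw [Dvf, fderiv_clm_apply hσ (differentiableAt_const _)]
  simp

theorem norm_Dvf_le (hσ : IsC2BoundedBy σ M) (i j : Fin m) (z : Vec d) :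
    ‖Dvf d m σ i j z‖ ≤ M ^ 2 := by
  rw [Dvf_eq_fderiv_apply (hσ.differentiable z)]
  refine (ContinuousLinearMap.le_opNorm₂ _ _ _).trans ?_
  have hσe := (σ z).le_of_opNorm_le (hσ.norm_le z) (EuclideanSpace.single i (1 : ℝ))
  simp only [PiLp.norm_single, norm_one, mul_one] at hσe ⊢
  rw [sq]
  exact mul_le_mul (hσ.norm_fderiv_le z) hσe (norm_nonneg _) hσ.nonneg

theorem norm_Dvf_sub_le (hσ : IsC2BoundedBy σ M) (i j : Fin m) (z w : Vec d) :
    ‖Dvf d m σ i j z - Dvf d m σ i j w‖ ≤ 2 * M ^ 2 * ‖z - w‖ := by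
  set ei : Vec m := EuclideanSpace.single i 1
  set ej : Vec m := EuclideanSpace.single j 1
  have hei : ‖ei‖ = 1 := by simp [ei]
  have hej : ‖ej‖ = 1 := by simp [ej]
  rw [Dvf_eq_fderiv_apply (hσ.differentiable z), Dvf_eq_fderiv_apply (hσ.differentiable w)]
  have hsplit : fderiv ℝ σ z (σ z ei) ej - fderiv ℝ σ w (σ w ei) ej =
      (fderiv ℝ σ z - fderiv ℝ σ w) (σ z ei) ej + fderiv ℝ σ w ((σ z - σ w) ei) ej := by
    simp only [sub_apply, map_sub]
    abel
  rw [hsplit]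
  refine (norm_add_le _ _).trans ?_
  have h₁ := ContinuousLinearMap.le_opNorm₂ (fderiv ℝ σ z - fderiv ℝ σ w) (σ z ei) ej
  have h₂ := ContinuousLinearMap.le_opNorm₂ (fderiv ℝ σ w) ((σ z - σ w) ei) ej
  have h₃ := (σ z).le_opNorm ei
  have h₄ := (σ z - σ w).le_opNorm ei
  rw [hej, mul_one] at h₁ h₂
  rw [hei, mul_one] at h₃ h₄
  have hM := hσ.nonneg
  calc _ ≤ ‖fderiv ℝ σ z - fderiv ℝ σ w‖ * ‖σ z ei‖ + ‖fderiv ℝ σ w‖ * ‖(σ z - σ w) ei‖ :=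
        add_le_add h₁ h₂
    _ ≤ (M * ‖z - w‖) * M + M * (M * ‖z - w‖) := by
        gcongr
        · exact hσ.norm_fderiv_sub_le z w
        · exact h₃.trans (hσ.norm_le z)
        · exact hσ.norm_fderiv_le w
        · exact h₄.trans (hσ.norm_sub_le z w)
    _ = 2 * M ^ 2 * ‖z - w‖ := by ring

def secondOrderTerm (σ : Vec d → Vec m →L[ℝ] Vec d) (A : Mat m) (z : Vec d) : Vec d :=
  ∑ i : Fin m, ∑ j : Fin m, A (i, j) • Dvf d m σ i j z

theorem norm_sum_sum_smul_le {ι E : Type*} [Fintype ι] [SeminormedAddCommGroup E]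
    [NormedSpace ℝ E] (A : EuclideanSpace ℝ (ι × ι)) {v : ι → ι → E} {B : ℝ}
    (hv : ∀ i j, ‖v i j‖ ≤ B) :
    ‖∑ i, ∑ j, A (i, j) • v i j‖ ≤ (Fintype.card ι : ℝ) ^ 2 * ‖A‖ * B := by
  calc ‖∑ i, ∑ j, A (i, j) • v i j‖ ≤ ∑ _i : ι, ∑ _j : ι, ‖A‖ * B := by
        refine (norm_sum_le _ _).trans (sum_le_sum fun i _ => ?_)
        refine (norm_sum_le _ _).trans (sum_le_sum fun j _ => ?_)
        rw [norm_smul]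
        exact mul_le_mul (PiLp.norm_apply_le A (i, j)) (hv i j) (norm_nonneg _) (norm_nonneg _)
    _ = (Fintype.card ι : ℝ) ^ 2 * ‖A‖ * B := by
        simp only [sum_const, card_univ, nsmul_eq_mul]
        ring

theorem norm_secondOrderTerm_le (hσ : IsC2BoundedBy σ M) (A : Mat m) (z : Vec d) :
    ‖secondOrderTerm σ A z‖ ≤ m ^ 2 * ‖A‖ * M ^ 2 := by
  simpa [secondOrderTerm] using norm_sum_sum_smul_le A (norm_Dvf_le hσ · · z)

theorem norm_secondOrderTerm_sub_le (hσ : IsC2BoundedBy σ M) (A : Mat m) (z w : Vec d) :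
    ‖secondOrderTerm σ A z - secondOrderTerm σ A w‖ ≤ m ^ 2 * ‖A‖ * (2 * M ^ 2 * ‖z - w‖) := by
  simp only [secondOrderTerm, ← sum_sub_distrib, ← smul_sub]
  simpa using norm_sum_sum_smul_le A (norm_Dvf_sub_le hσ · · z w)

theorem ContinuousLinearMap.apply_eq_sum_single {F : Type*} [NormedAddCommGroup F]
    [NormedSpace ℝ F] (f : Vec m →L[ℝ] F) (a : Vec m) :
    f a = ∑ i, a i • f (EuclideanSpace.single i 1) := by
  conv_lhs => rw [← (EuclideanSpace.basisFun (Fin m) ℝ).sum_repr a]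
  simp

theorem secondOrderTerm_eq_add_add_fderiv {z : Vec d} (hσ : DifferentiableAt ℝ σ z)
    {A B C : Mat m} {a b : Vec m} (h : ∀ i j, A (i, j) - B (i, j) - C (i, j) = a i * b j) :
    secondOrderTerm σ A z =
      secondOrderTerm σ B z + secondOrderTerm σ C z + fderiv ℝ σ z (σ z a) b := by
  have hA : ∀ i j, A (i, j) = B (i, j) + C (i, j) + a i * b j := fun i j => by
    linarith [h i j]
  have hbil : fderiv ℝ σ z (σ z a) b = ∑ i, ∑ j, (a i * b j) • Dvf d m σ i j z := by
    rw [(σ z).apply_eq_sum_single, map_sum, _root_.sum_apply]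
    refine sum_congr rfl fun i _ => ?_
    rw [map_smul, smul_apply, ContinuousLinearMap.apply_eq_sum_single, smul_sum]
    refine sum_congr rfl fun j _ => ?_
    rw [smul_smul, mul_comm, Dvf_eq_fderiv_apply hσ]
  simp only [secondOrderTerm, hbil, hA, add_smul, sum_add_distrib]

end VectorFields

section Remainder

variable {d m : ℕ} {σ : Vec d → Vec m →L[ℝ] Vec d} {x : ℝ → Vec m} {X2 : ℝ → ℝ → Mat m}
  {y : ℝ → Vec d} {M G H γ κ θ T : ℝ}

-- `IsRDESolution` bounds `‖davieRemainder σ x X2 y s t‖`, up to unfolding this definition.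
def davieRemainder (σ : Vec d → Vec m →L[ℝ] Vec d) (x : ℝ → Vec m) (X2 : ℝ → ℝ → Mat m)
    (y : ℝ → Vec d) (s t : ℝ) : Vec d :=
  y t - y s - σ (y s) (x t - x s) - secondOrderTerm σ (X2 s t) (y s)

theorem davieRemainder_sub_sub_eq {s u t : ℝ} (hσ : DifferentiableAt ℝ σ (y s))
    (hchen : ∀ i j : Fin m,
      X2 s t (i, j) - X2 s u (i, j) - X2 u t (i, j) = (x u i - x s i) * (x t j - x u j)) :
    davieRemainder σ x X2 y s t - davieRemainder σ x X2 y s u - davieRemainder σ x X2 y u t =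
      (σ (y u) - σ (y s) - fderiv ℝ σ (y s) (y u - y s)) (x t - x u) +
        fderiv ℝ σ (y s) (y u - y s - σ (y s) (x u - x s)) (x t - x u) +
        (secondOrderTerm σ (X2 u t) (y u) - secondOrderTerm σ (X2 u t) (y s)) := by
  have hxst : x t - x s = (x u - x s) + (x t - x u) := by abel
  rw [davieRemainder, davieRemainder, davieRemainder,
    secondOrderTerm_eq_add_add_fderiv hσ (a := x u - x s) (b := x t - x u)
      (by simpa using hchen), hxst, map_add]
  simp only [map_sub, sub_apply]
  abel

theorem norm_davieRemainder_sub_sub_le {s u t : ℝ} (hσ : IsC2BoundedBy σ M)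
    (hchen : ∀ i j : Fin m,
      X2 s t (i, j) - X2 s u (i, j) - X2 u t (i, j) = (x u i - x s i) * (x t j - x u j)) :
    ‖davieRemainder σ x X2 y s t - davieRemainder σ x X2 y s u - davieRemainder σ x X2 y u t‖ ≤
      M * ‖y u - y s‖ ^ 2 * ‖x t - x u‖ +
        M * ‖y u - y s - σ (y s) (x u - x s)‖ * ‖x t - x u‖ +
        2 * (m ^ 2 * M ^ 2) * ‖X2 u t‖ * ‖y u - y s‖ := by
  rw [davieRemainder_sub_sub_eq (hσ.differentiable _) hchen]
  refine norm_add₃_le.trans (add_le_add (add_le_add ?_ ?_) ?_)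
  · exact ((ContinuousLinearMap.le_opNorm _ _).trans
      (mul_le_mul_of_nonneg_right (hσ.norm_sub_sub_fderiv_le _ _) (norm_nonneg _)))
  · refine (ContinuousLinearMap.le_opNorm₂ _ _ _).trans ?_
    gcongr
    exact hσ.norm_fderiv_le _
  · refine (norm_secondOrderTerm_sub_le hσ _ _ _).trans (le_of_eq ?_)
    ring

theorem sub_sub_eq_secondOrderTerm_add_davieRemainder (u v : ℝ) :
    y v - y u - σ (y u) (x v - x u) =
      secondOrderTerm σ (X2 u v) (y u) + davieRemainder σ x X2 y u v := by
  rw [davieRemainder]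
  abel

theorem norm_sub_sub_le_of_norm_davieRemainder_le (hσ : IsC2BoundedBy σ M)
    (hB : IsRoughPathBoundedBy γ T G x X2) (hG : 0 ≤ G) (hκγ : κ ≤ γ) (h2κθ : 2 * κ ≤ θ)
    {u v : ℝ} (hu : 0 ≤ u) (huv : u < v) (hv : v ≤ T) (hvu : v - u ≤ 1)
    (hR : ‖davieRemainder σ x X2 y u v‖ ≤ G * (v - u) ^ θ) :
    ‖y v - y u - σ (y u) (x v - x u)‖ ≤ (m ^ 2 * M ^ 2 + 1) * G * (v - u) ^ (2 * κ) := by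
  have hℓ := sub_pos.2 huv
  rw [sub_sub_eq_secondOrderTerm_add_davieRemainder]
  calc _ ≤ m ^ 2 * ‖X2 u v‖ * M ^ 2 + G * (v - u) ^ θ :=
        (norm_add_le _ _).trans (add_le_add (norm_secondOrderTerm_le hσ _ _) hR)
    _ ≤ m ^ 2 * (G * (v - u) ^ (2 * κ)) * M ^ 2 + G * (v - u) ^ (2 * κ) := by
        gcongr _ * ?_ * _ + _ * ?_
        · refine (hB.norm_le u v hu huv hv).trans (mul_le_mul_of_nonneg_left ?_ hG)
          exact Real.rpow_le_rpow_of_exponent_ge hℓ hvu (by linarith)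
        · exact Real.rpow_le_rpow_of_exponent_ge hℓ hvu h2κθ
    _ = _ := by ring

theorem norm_sub_le_of_norm_davieRemainder_le (hσ : IsC2BoundedBy σ M)
    (hB : IsRoughPathBoundedBy γ T G x X2) (hG : 0 ≤ G) (hκ : 0 ≤ κ) (hκγ : κ ≤ γ)
    (h2κθ : 2 * κ ≤ θ) {u v : ℝ} (hu : 0 ≤ u) (huv : u < v) (hv : v ≤ T) (hvu : v - u ≤ 1)
    (hR : ‖davieRemainder σ x X2 y u v‖ ≤ G * (v - u) ^ θ) :
    ‖y v - y u‖ ≤ (M + m ^ 2 * M ^ 2 + 1) * G * (v - u) ^ κ := by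
  have hℓ := sub_pos.2 huv
  calc ‖y v - y u‖ ≤ ‖σ (y u) (x v - x u)‖ + ‖y v - y u - σ (y u) (x v - x u)‖ :=
        norm_le_norm_add_norm_sub' _ _
    _ ≤ M * (G * (v - u) ^ γ) + (m ^ 2 * M ^ 2 + 1) * G * (v - u) ^ (2 * κ) :=
        add_le_add ((σ (y u)).le_of_opNorm_le_of_le (hσ.norm_le _) (hB.norm_sub_le u v hu huv hv))
          (norm_sub_sub_le_of_norm_davieRemainder_le hσ hB hG hκγ h2κθ hu huv hv hvu hR)
    _ ≤ M * (G * (v - u) ^ κ) + (m ^ 2 * M ^ 2 + 1) * G * (v - u) ^ κ := by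
        have := hσ.nonneg
        gcongr _ * (_ * ?_) + _ * ?_
        · exact Real.rpow_le_rpow_of_exponent_ge hℓ hvu hκγ
        · exact Real.rpow_le_rpow_of_exponent_ge hℓ hvu (by linarith)
    _ = _ := by ring

theorem norm_davieRemainder_sub_sub_le_rpow (hσ : IsC2BoundedBy σ M)
    (hB : IsRoughPathBoundedBy γ T G x X2) (hG : 1 ≤ G) (hκ : 0 ≤ κ) (hκγ : κ ≤ γ)
    (h2κθ : 2 * κ ≤ θ) {s u t : ℝ} (hs : 0 ≤ s) (hsu : s < u) (hmid : t - u = u - s)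
    (ht : t ≤ T) (hℓ1 : u - s ≤ 1) (hR : ‖davieRemainder σ x X2 y s u‖ ≤ G * (u - s) ^ θ) :
    ‖davieRemainder σ x X2 y s t - davieRemainder σ x X2 y s u - davieRemainder σ x X2 y u t‖ ≤
      4 * (M + m ^ 2 * M ^ 2 + 1) ^ 3 * G ^ 3 * (u - s) ^ (2 * κ + γ) := by
  set L := M + m ^ 2 * M ^ 2 + 1
  set ℓ := u - s
  have hℓ : 0 < ℓ := sub_pos.2 hsu
  have hut : u < t := by linarith
  have hM := hσ.nonneg
  have hmM : 0 ≤ (m : ℝ) ^ 2 * M ^ 2 := by positivity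
  have hML : M ≤ L := by linarith
  have hmML : m ^ 2 * M ^ 2 ≤ L := by linarith
  have hL : 1 ≤ L := by linarith
  have hP2 : ℓ ^ (2 * κ) = (ℓ ^ κ) ^ 2 := by
    rw [mul_comm, Real.rpow_mul hℓ.le, Real.rpow_two]
  have hδ1 := norm_sub_le_of_norm_davieRemainder_le hσ hB (by linarith) hκ hκγ h2κθ hs hsu
    (by linarith) hℓ1 hR
  have hδ2 : ‖y u - y s - σ (y s) (x u - x s)‖ ≤ L * G * (ℓ ^ κ) ^ 2 := by
    refine (norm_sub_sub_le_of_norm_davieRemainder_le hσ hB (by linarith) hκγ h2κθ hs hsu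
      (by linarith) hℓ1 hR).trans ?_
    rw [hP2]
    gcongr
    linarith
  have hx : ‖x t - x u‖ ≤ G * ℓ ^ γ := hmid ▸ hB.norm_sub_le u t (by linarith) hut ht
  have hX : ‖X2 u t‖ ≤ G * (ℓ ^ κ * ℓ ^ γ) := by
    refine (hmid ▸ hB.norm_le u t (by linarith) hut ht).trans ?_
    rw [← Real.rpow_add hℓ]
    exact mul_le_mul_of_nonneg_left
      (Real.rpow_le_rpow_of_exponent_ge hℓ hℓ1 (by linarith)) (by linarith)
  have hLG : L ^ 2 * G ^ 2 ≤ L ^ 3 * G ^ 3 := by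
    rw [← mul_pow, ← mul_pow]
    exact pow_le_pow_right₀ (one_le_mul_of_one_le_of_one_le hL hG) (by norm_num)
  have hPQ : 0 ≤ (ℓ ^ κ) ^ 2 * ℓ ^ γ := by positivity
  calc _ ≤ M * ‖y u - y s‖ ^ 2 * ‖x t - x u‖ +
          M * ‖y u - y s - σ (y s) (x u - x s)‖ * ‖x t - x u‖ +
          2 * (m ^ 2 * M ^ 2) * ‖X2 u t‖ * ‖y u - y s‖ :=
        norm_davieRemainder_sub_sub_le hσ (hB.chen s u t hs hsu.le hut.le ht)
    _ ≤ L * (L * G * ℓ ^ κ) ^ 2 * (G * ℓ ^ γ) + L * (L * G * (ℓ ^ κ) ^ 2) * (G * ℓ ^ γ) +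
          2 * L * (G * (ℓ ^ κ * ℓ ^ γ)) * (L * G * ℓ ^ κ) := by
        gcongr
    _ = L ^ 3 * G ^ 3 * ((ℓ ^ κ) ^ 2 * ℓ ^ γ) +
          3 * (L ^ 2 * G ^ 2 * ((ℓ ^ κ) ^ 2 * ℓ ^ γ)) := by ring
    _ ≤ 4 * L ^ 3 * G ^ 3 * ((ℓ ^ κ) ^ 2 * ℓ ^ γ) := by
        nlinarith [mul_le_mul_of_nonneg_right hLG hPQ]
    _ = 4 * L ^ 3 * G ^ 3 * ℓ ^ (2 * κ + γ) := by rw [Real.rpow_add hℓ, hP2]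

theorem norm_davieRemainder_le_of_half (hσ : IsC2BoundedBy σ M)
    (hB : IsRoughPathBoundedBy γ T G x X2) (hG : 1 ≤ G) (hκ : 0 ≤ κ) (hκγ : κ ≤ γ)
    (h2κθ : 2 * κ ≤ θ) (hθ : θ ≤ 2 * κ + γ) (hH1 : H ≤ 1)
    (hsmall : 4 * (M + m ^ 2 * M ^ 2 + 1) ^ 3 * G ^ 2 * H ^ (2 * κ + γ - θ) ≤ 2 ^ θ - 2)
    {h : ℝ} (hh : h ≤ H)
    (hhalf : ∀ u v, 0 ≤ u → u < v → v ≤ T → v - u ≤ h / 2 →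
      ‖davieRemainder σ x X2 y u v‖ ≤ G * (v - u) ^ θ) :
    ∀ s t, 0 ≤ s → s < t → t ≤ T → t - s ≤ h →
      ‖davieRemainder σ x X2 y s t‖ ≤ G * (t - s) ^ θ := by
  intro s t hs hst ht hlen
  have hM := hσ.nonneg
  set ℓ := (t - s) / 2 with hℓ_def
  have hℓ : 0 < ℓ := by linarith
  have hℓH : ℓ ≤ H := by linarith
  set u := s + ℓ
  have hsu : u - s = ℓ := add_sub_cancel_left s ℓ
  have hut : t - u = ℓ := by simp only [u, ℓ]; ring
  have hRsu := hhalf s u hs (by linarith) (by linarith) (by linarith)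
  have hRut := hhalf u t (by linarith) (by linarith) ht (by linarith)
  rw [hsu] at hRsu
  rw [hut] at hRut
  have hdefect := norm_davieRemainder_sub_sub_le_rpow hσ hB hG hκ hκγ h2κθ hs (by linarith)
    (hut.trans hsu.symm) ht (by linarith) (hsu ▸ hRsu)
  rw [hsu] at hdefect
  have hgain : ℓ ^ (2 * κ + γ) ≤ H ^ (2 * κ + γ - θ) * ℓ ^ θ := by
    rw [← sub_add_cancel (2 * κ + γ) θ, Real.rpow_add hℓ, add_sub_cancel_right]
    exact mul_le_mul_of_nonneg_right (Real.rpow_le_rpow hℓ.le hℓH (by linarith)) (by positivity)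
  calc ‖davieRemainder σ x X2 y s t‖ = ‖davieRemainder σ x X2 y s u +
        davieRemainder σ x X2 y u t + (davieRemainder σ x X2 y s t -
          davieRemainder σ x X2 y s u - davieRemainder σ x X2 y u t)‖ := by congr 1; abel
    _ ≤ G * ℓ ^ θ + G * ℓ ^ θ +
          4 * (M + m ^ 2 * M ^ 2 + 1) ^ 3 * G ^ 3 * (H ^ (2 * κ + γ - θ) * ℓ ^ θ) :=
        norm_add₃_le.trans (add_le_add (add_le_add hRsu hRut) (hdefect.trans (by gcongr)))
    _ = G * ℓ ^ θ + G * ℓ ^ θ +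
          4 * (M + m ^ 2 * M ^ 2 + 1) ^ 3 * G ^ 2 * H ^ (2 * κ + γ - θ) * (G * ℓ ^ θ) := by ring
    _ ≤ G * ℓ ^ θ + G * ℓ ^ θ + (2 ^ θ - 2) * (G * ℓ ^ θ) := by gcongr
    _ = G * (2 * ℓ) ^ θ := by rw [Real.mul_rpow zero_le_two hℓ.le]; ring
    _ = G * (t - s) ^ θ := by rw [hℓ_def, mul_div_cancel₀ _ two_ne_zero]

theorem norm_davieRemainder_le_of_scale (hσ : IsC2BoundedBy σ M)
    (hB : IsRoughPathBoundedBy γ T G x X2) (hG : 1 ≤ G) (hκ : 0 ≤ κ) (hκγ : κ ≤ γ)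
    (h2κθ : 2 * κ ≤ θ) (hθ : θ ≤ 2 * κ + γ) {C ρ : ℝ} (hθρ : θ < ρ)
    (hR : ∀ s t, 0 ≤ s → s ≤ t → t ≤ T → ‖davieRemainder σ x X2 y s t‖ ≤ C * (t - s) ^ ρ)
    (hH : 0 < H) (hH1 : H ≤ 1)
    (hsmall : 4 * (M + m ^ 2 * M ^ 2 + 1) ^ 3 * G ^ 2 * H ^ (2 * κ + γ - θ) ≤ 2 ^ θ - 2) :
    ∀ u v, 0 ≤ u → u < v → v ≤ T → v - u ≤ H →
      ‖davieRemainder σ x X2 y u v‖ ≤ G * (v - u) ^ θ := by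
  obtain ⟨h₀, hh₀, hC⟩ := exists_pos_forall_mul_rpow_le C (show 0 < G by linarith) (sub_pos.2 hθρ)
  refine halving_induction (Q := fun h => ∀ u v, 0 ≤ u → u < v → v ≤ T → v - u ≤ h →
      ‖davieRemainder σ x X2 y u v‖ ≤ G * (v - u) ^ θ) hH hh₀
    (fun a b hab hb u v hu huv hv hlen => hb u v hu huv hv (hlen.trans hab)) ?_
    (fun h _ hh hhalf => norm_davieRemainder_le_of_half hσ hB hG hκ hκγ h2κθ hθ hH1 hsmall hh hhalf)
  intro u v hu huv hv hlen
  have hℓ := sub_pos.2 huv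
  calc ‖davieRemainder σ x X2 y u v‖ ≤ C * (v - u) ^ ρ := hR u v hu huv.le hv
    _ = C * (v - u) ^ (ρ - θ) * (v - u) ^ θ := by
        rw [mul_assoc, ← Real.rpow_add hℓ, sub_add_cancel]
    _ ≤ G * (v - u) ^ θ := by gcongr; exact hC _ hℓ.le hlen

theorem norm_sub_le_of_scale (hσ : IsC2BoundedBy σ M) (hB : IsRoughPathBoundedBy γ T G x X2)
    (hG : 0 ≤ G) (hκ : 0 ≤ κ) (hκγ : κ ≤ γ) (h2κθ : 2 * κ ≤ θ) (hH : 0 < H) (hH1 : H ≤ 1)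
    (hfine : ∀ u v, 0 ≤ u → u < v → v ≤ T → v - u ≤ H →
      ‖davieRemainder σ x X2 y u v‖ ≤ G * (v - u) ^ θ)
    {s t : ℝ} (hs : 0 ≤ s) (hst : s ≤ t) (ht : t ≤ T) :
    ‖y t - y s‖ ≤ (T * H⁻¹ + 1) * (M + m ^ 2 * M ^ 2 + 1) * G * (t - s) ^ κ := by
  have hM := hσ.nonneg
  calc ‖y t - y s‖ ≤ ((t - s) / H + 1) * ((M + m ^ 2 * M ^ 2 + 1) * G) * (t - s) ^ κ := by
        refine norm_sub_le_of_forall_norm_sub_le_rpow hst hH (by positivity) hκ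
          fun u v hu huv hv hlen => ?_
        exact norm_sub_le_of_norm_davieRemainder_le hσ hB hG hκ hκγ h2κθ (by linarith) huv
          (by linarith) (hlen.trans hH1) (hfine u v (by linarith) huv (by linarith) hlen)
    _ ≤ (T * H⁻¹ + 1) * (M + m ^ 2 * M ^ 2 + 1) * G * (t - s) ^ κ := by
        rw [div_eq_mul_inv, ← mul_assoc]
        gcongr
        linarith

theorem IsRoughPathBoundedBy.norm_sub_le_of_scale (hB : IsRoughPathBoundedBy γ T G x X2)
    (hG : 0 ≤ G) (hκ : 0 ≤ κ) (hκγ : κ ≤ γ) (hH : 0 < H) (hH1 : H ≤ 1) {s t : ℝ} (hs : 0 ≤ s)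
    (hst : s ≤ t) (ht : t ≤ T) : ‖x t - x s‖ ≤ (T * H⁻¹ + 1) * G * (t - s) ^ κ := by
  calc ‖x t - x s‖ ≤ ((t - s) / H + 1) * G * (t - s) ^ κ := by
        refine norm_sub_le_of_forall_norm_sub_le_rpow hst hH hG hκ
          fun u v hu huv hv hlen => (hB.norm_sub_le u v (by linarith) huv (by linarith)).trans ?_
        exact mul_le_mul_of_nonneg_left
          (Real.rpow_le_rpow_of_exponent_ge (sub_pos.2 huv) (hlen.trans hH1) hκγ) hG
    _ ≤ (T * H⁻¹ + 1) * G * (t - s) ^ κ := by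
        rw [div_eq_mul_inv]
        gcongr
        linarith

theorem norm_sub_sub_le_of_scale (hσ : IsC2BoundedBy σ M)
    (hB : IsRoughPathBoundedBy γ T G x X2) (hG : 0 ≤ G) (hκ : 0 ≤ κ) (hκγ : κ ≤ γ)
    (hκ1 : κ ≤ 1) (h2κθ : 2 * κ ≤ θ) (hH : 0 < H) (hH1 : H ≤ 1)
    (hfine : ∀ u v, 0 ≤ u → u < v → v ≤ T → v - u ≤ H →
      ‖davieRemainder σ x X2 y u v‖ ≤ G * (v - u) ^ θ)
    {s t : ℝ} (hs : 0 ≤ s) (hst : s ≤ t) (ht : t ≤ T) :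
    ‖y t - y s - σ (y s) (x t - x s)‖ ≤
      (T * H⁻¹ + 1) * (2 * M + m ^ 2 * M ^ 2 + 1) * G * H⁻¹ * (t - s) ^ (2 * κ) := by
  have hM := hσ.nonneg
  have hT : 0 ≤ T := by linarith
  have hH1' : 1 ≤ H⁻¹ := one_le_inv_iff₀.2 ⟨hH, hH1⟩
  rcases hst.eq_or_lt with rfl | hst
  · simp only [sub_self, map_zero, norm_zero]
    positivity
  have hTH : 1 ≤ T * H⁻¹ + 1 := by
    have : 0 ≤ T * H⁻¹ := by positivity
    linarith
  by_cases hsmall : t - s ≤ H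
  · have hcoef : (m ^ 2 * M ^ 2 + 1) * G ≤ (T * H⁻¹ + 1) * (2 * M + m ^ 2 * M ^ 2 + 1) * G * H⁻¹ :=
      calc (m ^ 2 * M ^ 2 + 1) * G ≤ 1 * (2 * M + m ^ 2 * M ^ 2 + 1) * G * 1 := by nlinarith
        _ ≤ _ := by gcongr
    calc ‖y t - y s - σ (y s) (x t - x s)‖ ≤ (m ^ 2 * M ^ 2 + 1) * G * (t - s) ^ (2 * κ) :=
          norm_sub_sub_le_of_norm_davieRemainder_le hσ hB hG hκγ h2κθ hs hst ht
            (hsmall.trans hH1) (hfine s t hs hst ht hsmall)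
      _ ≤ _ := by gcongr
  rw [not_le] at hsmall
  have hy := norm_sub_le_of_scale hσ hB hG hκ hκγ h2κθ hH hH1 hfine hs hst.le ht
  have hx := hB.norm_sub_le_of_scale hG hκ hκγ hH hH1 hs hst.le ht
  calc ‖y t - y s - σ (y s) (x t - x s)‖ ≤ ‖y t - y s‖ + ‖σ (y s) (x t - x s)‖ := norm_sub_le _ _
    _ ≤ (T * H⁻¹ + 1) * (M + m ^ 2 * M ^ 2 + 1) * G * (t - s) ^ κ +
          M * ((T * H⁻¹ + 1) * G * (t - s) ^ κ) :=
        add_le_add hy ((σ (y s)).le_of_opNorm_le_of_le (hσ.norm_le _) hx)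
    _ = (T * H⁻¹ + 1) * (2 * M + m ^ 2 * M ^ 2 + 1) * G * (t - s) ^ κ := by ring
    _ ≤ (T * H⁻¹ + 1) * (2 * M + m ^ 2 * M ^ 2 + 1) * G * (H⁻¹ * (t - s) ^ (2 * κ)) := by
        gcongr
        exact rpow_le_inv_mul_rpow_two_mul hH hH1 hsmall.le hκ hκ1
    _ = _ := by ring

theorem apriori_bounds_of_scale (hσ : IsC2BoundedBy σ M)
    (hB : IsRoughPathBoundedBy γ T G x X2) (hG : 1 ≤ G) (hκ : 0 ≤ κ) (hκγ : κ ≤ γ)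
    (hκ1 : κ ≤ 1) (h2κθ : 2 * κ ≤ θ) (hθ : θ ≤ 2 * κ + γ) {C ρ : ℝ} (hθρ : θ < ρ)
    (hR : ∀ s t, 0 ≤ s → s ≤ t → t ≤ T → ‖davieRemainder σ x X2 y s t‖ ≤ C * (t - s) ^ ρ)
    (hH : 0 < H) (hH1 : H ≤ 1)
    (hsmall : 4 * (M + m ^ 2 * M ^ 2 + 1) ^ 3 * G ^ 2 * H ^ (2 * κ + γ - θ) ≤ 2 ^ θ - 2)
    {s t : ℝ} (hs : 0 ≤ s) (hst : s ≤ t) (ht : t ≤ T) :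
    ‖y t - y s‖ ≤ (t - s) ^ κ * ((T * H⁻¹ + 1) * (2 * M + m ^ 2 * M ^ 2 + 1) * G * H⁻¹) ∧
      ‖y t - y s - σ (y s) (x t - x s)‖ ≤
        (t - s) ^ (2 * κ) * ((T * H⁻¹ + 1) * (2 * M + m ^ 2 * M ^ 2 + 1) * G * H⁻¹) := by
  have hM := hσ.nonneg
  have hT : 0 ≤ T := by linarith
  have hfine := norm_davieRemainder_le_of_scale hσ hB hG hκ hκγ h2κθ hθ hθρ hR hH hH1 hsmall
  refine ⟨(norm_sub_le_of_scale hσ hB (by linarith) hκ hκγ h2κθ hH hH1 hfine hs hst ht).trans ?_,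
    (norm_sub_sub_le_of_scale hσ hB (by linarith) hκ hκγ hκ1 h2κθ hH hH1 hfine hs hst ht).trans
      (le_of_eq (by ring))⟩
  rw [mul_comm ((t - s) ^ κ)]
  have hH1' : 1 ≤ H⁻¹ := one_le_inv_iff₀.2 ⟨hH, hH1⟩
  have hst' := sub_nonneg.2 hst
  calc (T * H⁻¹ + 1) * (M + m ^ 2 * M ^ 2 + 1) * G * (t - s) ^ κ
      ≤ (T * H⁻¹ + 1) * (2 * M + m ^ 2 * M ^ 2 + 1) * G * (t - s) ^ κ := by
        gcongr _ * ?_ * _ * _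
        linarith
    _ = (T * H⁻¹ + 1) * (2 * M + m ^ 2 * M ^ 2 + 1) * G * 1 * (t - s) ^ κ := by ring
    _ ≤ _ := by gcongr

end Remainder

theorem exists_apriori_bound {d m : ℕ} {κ γ T : ℝ} (hκ : 1 / 3 < κ) (hκγ : κ < γ)
    (hγ : γ ≤ 1) (hT : 0 ≤ T) {σ : Vec d → Vec m →L[ℝ] Vec d} (hσ : IsC3Bounded σ) :
    ∃ (c : ℝ) (n : ℕ), 0 ≤ c ∧
      ∀ (x : ℝ → Vec m) (X2 : ℝ → ℝ → Mat m) (a : Vec d) (y : ℝ → Vec d),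
        IsRoughPath m γ 0 T x X2 → IsRDESolution d m (3 * κ) T σ x X2 a y →
        ∀ s t : ℝ, 0 ≤ s → s ≤ t → t ≤ T →
          ‖y t - y s‖ ≤ (t - s) ^ κ * (c *
            (1 + holderInftyNorm γ 0 T x + (holder2ENorm (2 * γ) 0 T X2).toReal) ^ n) ∧
          ‖y t - y s - σ (y s) (x t - x s)‖ ≤ (t - s) ^ (2 * κ) * (c *
            (1 + holderInftyNorm γ 0 T x + (holder2ENorm (2 * γ) 0 T X2).toReal) ^ n) := by
  obtain ⟨M, hM⟩ := hσ.exists_isC2BoundedBy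
  have hM0 := hM.nonneg
  set θ := (1 + 3 * κ) / 2 with hθ_def
  have hθ1 : 1 < θ := by linarith
  have hθρ : θ < 3 * κ := by linarith
  have h2κθ : 2 * κ ≤ θ := by linarith
  have hθ : θ ≤ 2 * κ + γ := by linarith
  obtain ⟨b, r, hb, hscale⟩ := exists_small_scale (4 * (M + m ^ 2 * M ^ 2 + 1) ^ 3)
    (ε := 2 * κ + γ - θ) (by linarith) (η := 2 ^ θ - 2)
    (by linarith [Real.rpow_one (2 : ℝ) ▸ Real.rpow_lt_rpow_of_exponent_lt one_lt_two hθ1])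
  refine ⟨(T * b + 1) * (2 * M + m ^ 2 * M ^ 2 + 1) * b, 4 * r + 1, by positivity,
    fun x X2 a y hxX hy s t hs hst ht => ?_⟩
  obtain ⟨-, -, C, hC⟩ := hy
  set G := 1 + holderInftyNorm γ 0 T x + (holder2ENorm (2 * γ) 0 T X2).toReal
  have hG : 1 ≤ G := by
    have : 0 ≤ holderInftyNorm γ 0 T x := ENNReal.toReal_nonneg
    have : 0 ≤ (holder2ENorm (2 * γ) 0 T X2).toReal := ENNReal.toReal_nonneg
    linarith
  obtain ⟨H, hH, hH1, hsmall, hHinv⟩ := hscale (G ^ 2) (one_le_pow₀ hG)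
  have hcoef : (T * H⁻¹ + 1) * (2 * M + m ^ 2 * M ^ 2 + 1) * G * H⁻¹ ≤
      (T * b + 1) * (2 * M + m ^ 2 * M ^ 2 + 1) * b * G ^ (4 * r + 1) := by
    have hP : 1 ≤ (G ^ 2) ^ r := one_le_pow₀ (one_le_pow₀ hG)
    calc (T * H⁻¹ + 1) * (2 * M + m ^ 2 * M ^ 2 + 1) * G * H⁻¹
        ≤ ((T * b + 1) * (G ^ 2) ^ r) * (2 * M + m ^ 2 * M ^ 2 + 1) * G * (b * (G ^ 2) ^ r) := by
          gcongr
          nlinarith [mul_le_mul_of_nonneg_left hHinv hT]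
      _ = (T * b + 1) * (2 * M + m ^ 2 * M ^ 2 + 1) * b * G ^ (4 * r + 1) := by
          rw [← pow_mul, pow_succ, show 4 * r = 2 * r + 2 * r by ring, pow_add]
          ring
  obtain ⟨h₁, h₂⟩ := apriori_bounds_of_scale hM (hxX.isRoughPathBoundedBy (by linarith)) hG
    (by linarith) hκγ.le (by linarith) h2κθ hθ hθρ hC hH hH1 hsmall hs hst ht
  exact ⟨h₁.trans (by gcongr), h₂.trans (by gcongr)⟩

/-- **A priori bounds for solutions of rough differential equations.** There is a polynomial
`P` in two variables with nonnegative coefficients, depending only on `T, σ, γ, κ, d, m`,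
with `|y_t - y_s| ≤ (t-s)^κ P(‖x‖_{γ,∞,T}, ‖X²‖_{2γ})` and
`|y_t - y_s - σ(y_s)(x_t - x_s)| ≤ (t-s)^{2κ} P(‖x‖_{γ,∞,T}, ‖X²‖_{2γ})`. -/
theorem rde_apriori_bounds (d m : ℕ) (κ γ T : ℝ)
    (hκ : 1 / 3 < κ) (hκγ : κ < γ) (hγ : γ ≤ 1) (hT : 0 < T)
    (σ : Vec d → Vec m →L[ℝ] Vec d) (hσ : IsC3Bounded σ) :
    ∃ (N : ℕ) (c : ℕ → ℕ → ℝ), (∀ i j, 0 ≤ c i j) ∧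
      ∀ (x : ℝ → Vec m) (X2 : ℝ → ℝ → Mat m) (a : Vec d) (y : ℝ → Vec d),
        IsRoughPath m γ 0 T x X2 →
        IsRDESolution d m (3 * κ) T σ x X2 a y →
        ∀ s t : ℝ, 0 ≤ s → s ≤ t → t ≤ T →
          ‖y t - y s‖ ≤
            (t - s) ^ κ *
              ∑ i ∈ Finset.range N, ∑ j ∈ Finset.range N,
                c i j * (holderInftyNorm γ 0 T x) ^ i *
                  ((holder2ENorm (2 * γ) 0 T X2).toReal) ^ j ∧
          ‖y t - y s - σ (y s) (x t - x s)‖ ≤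
            (t - s) ^ (2 * κ) *
              ∑ i ∈ Finset.range N, ∑ j ∈ Finset.range N,
                c i j * (holderInftyNorm γ 0 T x) ^ i *
                  ((holder2ENorm (2 * γ) 0 T X2).toReal) ^ j := by
  obtain ⟨c, n, hc, hbound⟩ := exists_apriori_bound hκ hκγ hγ hT.le hσ
  refine ⟨n + 1, fun i j => c * (n.choose i : ℝ) * (n.choose j : ℝ), fun i j => by positivity,
    fun x X2 a y hxX hy s t hs hst ht => ?_⟩
  have hpoly := mul_one_add_add_pow_le_sum_choose (K := holderInftyNorm γ 0 T x)
    (X := (holder2ENorm (2 * γ) 0 T X2).toReal) n hc ENNReal.toReal_nonneg ENNReal.toReal_nonneg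
  obtain ⟨h₁, h₂⟩ := hbound x X2 a y hxX hy s t hs hst ht
  have hst' := sub_nonneg.2 hst
  exact ⟨h₁.trans (mul_le_mul_of_nonneg_left hpoly (by positivity)),
    h₂.trans (mul_le_mul_of_nonneg_left hpoly (by positivity))⟩

end
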